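/- arXiv:1403.6375 — 2 statements merged into one kernel-verified Lean document; each statement's English description precedes it below -/
import Mathlib

section
/- The set {e_i x^j : 0 ≤ i ≤ 3, 0 ≤ j ≤ 4T+2} ∪ {e_i y^l : 0 ≤ i ≤ 3, 1 ≤ l ≤ 4T+1} is a K-basis of the algebra A_T; in particular, dim_K A_T = 16(2T+1). -/
open scoped TensorProduct

/-- Generators of the path algebra `KΓ`: trivial paths `e i` and arrows `a i`, `b i`. -/
inductive Gen : Type
  | e : Fin 4 → Gen
  | a : Fin 4 → Gen
  | b : Fin 4 → Gen

variable (K : Type) [Field K]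

/-- `x := a 0 + a 1 + a 2 + a 3` in the free algebra. -/
noncomputable def gx : FreeAlgebra K Gen := ∑ i : Fin 4, FreeAlgebra.ι K (Gen.a i)

/-- `y := b 0 + b 1 + b 2 + b 3` in the free algebra. -/
noncomputable def gy : FreeAlgebra K Gen := ∑ i : Fin 4, FreeAlgebra.ι K (Gen.b i)

/-- The relations defining `A_T` as a quotient of the free algebra: the path algebra
relations for the circular quiver `Γ` (orthogonal idempotents `e i` summing to `1`,
and the source/target relations for the arrows), together with the relations
`x * y = 0`, `y * x = 0` and `x ^ (4T+2) + y ^ (4T+2) = 0` generating `I_T`. -/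
inductive ATRel (T : ℕ) : FreeAlgebra K Gen → FreeAlgebra K Gen → Prop
  | ee (i j : Fin 4) : ATRel T (FreeAlgebra.ι K (Gen.e i) * FreeAlgebra.ι K (Gen.e j))
      (if i = j then FreeAlgebra.ι K (Gen.e i) else 0)
  | sum : ATRel T (∑ i : Fin 4, FreeAlgebra.ι K (Gen.e i)) 1
  | ea (i : Fin 4) : ATRel T (FreeAlgebra.ι K (Gen.e i) * FreeAlgebra.ι K (Gen.a i))
      (FreeAlgebra.ι K (Gen.a i))
  | ae (i : Fin 4) : ATRel T (FreeAlgebra.ι K (Gen.a i) * FreeAlgebra.ι K (Gen.e (i + 1)))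
      (FreeAlgebra.ι K (Gen.a i))
  | eb (i : Fin 4) : ATRel T (FreeAlgebra.ι K (Gen.e i) * FreeAlgebra.ι K (Gen.b i))
      (FreeAlgebra.ι K (Gen.b i))
  | be (i : Fin 4) : ATRel T (FreeAlgebra.ι K (Gen.b i) * FreeAlgebra.ι K (Gen.e (i + 1)))
      (FreeAlgebra.ι K (Gen.b i))
  | xy : ATRel T (gx K * gy K) 0
  | yx : ATRel T (gy K * gx K) 0
  | xy_pow : ATRel T (gx K ^ (4 * T + 2) + gy K ^ (4 * T + 2)) 0

/-- The self-injective special biserial algebra `A_T = KΓ/I_T`. -/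
def AT (T : ℕ) : Type := RingQuot (ATRel K T)

noncomputable instance (T : ℕ) : Ring (AT K T) :=
  inferInstanceAs (Ring (RingQuot (ATRel K T)))
noncomputable instance (T : ℕ) : Algebra K (AT K T) :=
  inferInstanceAs (Algebra K (RingQuot (ATRel K T)))

variable (T : ℕ)

/-- The image of the trivial path `e i` in `A_T`. -/
noncomputable def eA (i : Fin 4) : AT K T :=
  show RingQuot (ATRel K T) from RingQuot.mkAlgHom K (ATRel K T) (FreeAlgebra.ι K (Gen.e i))

/-- The element `x = a 0 + a 1 + a 2 + a 3` of `A_T`. -/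
noncomputable def xA : AT K T :=
  show RingQuot (ATRel K T) from RingQuot.mkAlgHom K (ATRel K T) (gx K)

/-- The element `y = b 0 + b 1 + b 2 + b 3` of `A_T`. -/
noncomputable def yA : AT K T :=
  show RingQuot (ATRel K T) from RingQuot.mkAlgHom K (ATRel K T) (gy K)

/-!
Spanning needs only the relations: the span of the proposed basis contains `1 = ∑ e i` and is
stable under left multiplication by the generators `e k`, `x`, `y`, because
`x * e i = e (i - 1) * x` (and likewise for `y`), products mixing `x` and `y` vanish,
`x ^ (N+1) = y ^ (N+1) = 0` and `y ^ N = -x ^ N`, where `N = 4T+2`.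
Linear independence comes from a model: the left regular representation that `A_T` should have,
written down explicitly on coefficient functions `Fin 4 × ℤ → K`, satisfies the defining
relations, so `A_T` acts through it; applied to the coefficient vector of `1`, the proposed basis
elements give distinct unit vectors.
-/

open Fin.CommRing

theorem Submodule.eq_top_of_one_mem_of_mul_mem {R A : Type*} [CommSemiring R] [Semiring A]
    [Algebra R A] {s : Set A} (hs : Algebra.adjoin R s = ⊤) {S : Submodule R A}
    (h1 : 1 ∈ S) (hmul : ∀ a ∈ s, ∀ z ∈ S, a * z ∈ S) : S = ⊤ := by
  refine Submodule.eq_top_iff'.2 fun z => ?_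
  have hz : z ∈ Algebra.adjoin R s := hs ▸ Algebra.mem_top
  suffices ∀ w ∈ S, z * w ∈ S by simpa using this 1 h1
  induction hz using Algebra.adjoin_induction with
  | mem a ha => exact hmul a ha
  | algebraMap r =>
    exact fun w hw => by simpa [Algebra.algebraMap_eq_smul_one] using S.smul_mem r hw
  | add a b _ _ ha hb => exact fun w hw => by rw [add_mul]; exact add_mem (ha w hw) (hb w hw)
  | mul a b _ _ ha hb => exact fun w hw => by rw [mul_assoc]; exact ha _ (hb w hw)

namespace AT

/-- With `N = 4T+2` these present `A_T` (see `AT.lift`): the arrows are `a i = e i * x` and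
`b i = e i * y`, and `x * e (i + 1) = e i * x` encodes that `a i` runs from `i` to `i + 1`. -/
structure Relations {A : Type*} [Ring A] (N : ℕ) (e : Fin 4 → A) (x y : A) : Prop where
  e_mul_e : ∀ i j, e i * e j = if i = j then e i else 0
  sum_e : ∑ i, e i = 1
  x_mul_e : ∀ i, x * e (i + 1) = e i * x
  y_mul_e : ∀ i, y * e (i + 1) = e i * y
  x_mul_y : x * y = 0
  y_mul_x : y * x = 0
  pow_add_pow : x ^ N + y ^ N = 0

section Presentation

variable {A : Type*} [Ring A] {N : ℕ} {e : Fin 4 → A} {x y : A}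

namespace Relations

theorem e_mul_self (h : Relations N e x y) (i : Fin 4) : e i * e i = e i := by
  simp [h.e_mul_e]

theorem x_mul_e' (h : Relations N e x y) (i : Fin 4) : x * e i = e (i - 1) * x := by
  simpa using h.x_mul_e (i - 1)

theorem y_mul_e' (h : Relations N e x y) (i : Fin 4) : y * e i = e (i - 1) * y := by
  simpa using h.y_mul_e (i - 1)

theorem x_pow_eq_zero (h : Relations N e x y) (hN : 1 ≤ N) {m : ℕ} (hm : N < m) :
    x ^ m = 0 := by
  refine pow_eq_zero_of_le hm ?_
  obtain ⟨n, rfl⟩ := Nat.exists_eq_add_of_le' hN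
  rw [pow_succ', eq_neg_of_add_eq_zero_left h.pow_add_pow, pow_succ', mul_neg, ← mul_assoc,
    h.x_mul_y, zero_mul, neg_zero]

theorem y_pow_eq_zero (h : Relations N e x y) (hN : 1 ≤ N) {m : ℕ} (hm : N < m) :
    y ^ m = 0 := by
  refine pow_eq_zero_of_le hm ?_
  obtain ⟨n, rfl⟩ := Nat.exists_eq_add_of_le' hN
  rw [pow_succ', eq_neg_of_add_eq_zero_right h.pow_add_pow, pow_succ', mul_neg, ← mul_assoc,
    h.y_mul_x, zero_mul, neg_zero]

end Relations

def pathFamily (N : ℕ) (e : Fin 4 → A) (x y : A) : Fin 4 × (Fin (N + 1) ⊕ Fin (N - 1)) → A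
  | (i, .inl j) => e i * x ^ (j : ℕ)
  | (i, .inr l) => e i * y ^ ((l : ℕ) + 1)

theorem map_pathFamily {B F : Type*} [Ring B] [FunLike F A B] [RingHomClass F A B]
    (φ : F) (e : Fin 4 → A) (x y : A) (s : Fin 4 × (Fin (N + 1) ⊕ Fin (N - 1))) :
    φ (pathFamily N e x y s) = pathFamily N (φ ∘ e) (φ x) (φ y) s := by
  rcases s with ⟨i, j | l⟩ <;> simp [pathFamily]

theorem Relations.span_pathFamily {R : Type*} [CommRing R] [Algebra R A]
    (h : Relations N e x y) (hN : 1 ≤ N)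
    (hgen : Algebra.adjoin R (Set.range e ∪ {x, y}) = ⊤) :
    Submodule.span R (Set.range (pathFamily N e x y)) = ⊤ := by
  set S := Submodule.span R (Set.range (pathFamily N e x y))
  have hx (i : Fin 4) (m : ℕ) : e i * x ^ m ∈ S := by
    rcases le_or_gt m N with hm | hm
    · exact Submodule.subset_span ⟨(i, .inl ⟨m, by omega⟩), rfl⟩
    · simp [h.x_pow_eq_zero hN hm]
  have hy (i : Fin 4) (m : ℕ) (hm : 1 ≤ m) : e i * y ^ m ∈ S := by
    rcases lt_trichotomy m N with hlt | rfl | hgt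
    · obtain ⟨l, rfl⟩ := Nat.exists_eq_add_of_le' hm
      exact Submodule.subset_span ⟨(i, .inr ⟨l, by omega⟩), rfl⟩
    · rw [eq_neg_of_add_eq_zero_right h.pow_add_pow, mul_neg]
      exact neg_mem (hx i m)
    · simp [h.y_pow_eq_zero hN hgt]
  have he (k i : Fin 4) (z : A) (hz : e i * z ∈ S) : e k * (e i * z) ∈ S := by
    rw [← mul_assoc, h.e_mul_e]
    split_ifs with hki
    · exact hki ▸ hz
    · simp
  have hpath : ∀ a ∈ Set.range e ∪ {x, y}, ∀ s, a * pathFamily N e x y s ∈ S := by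
    simp only [Set.mem_union, or_imp, forall_and, Set.forall_mem_range, Set.forall_mem_insert,
      Set.mem_singleton_iff, forall_eq]
    refine ⟨fun k => ?_, ?_, ?_⟩ <;> rintro ⟨i, j | l⟩ <;> simp only [pathFamily]
    · exact he k i _ (hx i j)
    · exact he k i _ (hy i _ (by omega))
    · rw [← mul_assoc, h.x_mul_e', mul_assoc, ← pow_succ']
      exact hx _ _
    · rw [← mul_assoc, h.x_mul_e', mul_assoc, pow_succ', ← mul_assoc x, h.x_mul_y]
      simp
    · rw [← mul_assoc, h.y_mul_e', mul_assoc]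
      rcases j with ⟨_ | j, _⟩
      · simpa using hy (i - 1) 1 le_rfl
      · simp [pow_succ', ← mul_assoc, h.y_mul_x]
    · rw [← mul_assoc, h.y_mul_e', mul_assoc, ← pow_succ']
      exact hy _ _ (by omega)
  refine Submodule.eq_top_of_one_mem_of_mul_mem hgen ?_ fun a ha z hz => ?_
  · rw [← h.sum_e]
    exact sum_mem fun i _ => by simpa using hx i 0
  · exact (Submodule.span_le (p := S.comap (LinearMap.mulLeft R a)) |>.2
      (Set.range_subset_iff.2 (hpath a ha))) hz

theorem sum_mul_e_succ {a : Fin 4 → A} (he : ∀ i j, e i * e j = if i = j then e i else 0)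
    (hae : ∀ i, a i * e (i + 1) = a i) (i : Fin 4) : (∑ j, a j) * e (i + 1) = a i := by
  rw [Finset.sum_mul, Finset.sum_eq_single i (fun j _ hji => ?_) (by simp), hae]
  rw [← hae j, mul_assoc, he, if_neg (by simpa using hji), mul_zero]

theorem e_mul_sum {a : Fin 4 → A} (he : ∀ i j, e i * e j = if i = j then e i else 0)
    (hea : ∀ i, e i * a i = a i) (i : Fin 4) : e i * ∑ j, a j = a i := by
  rw [Finset.mul_sum, Finset.sum_eq_single i (fun j _ hji => ?_) (by simp), hea]
  rw [← hea j, ← mul_assoc, he, if_neg hji.symm, zero_mul]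

end Presentation

section RegularRepresentation

/-! The coordinate `(k, m)` stands for the path `e k * x ^ m` if `0 ≤ m ≤ N` and for
`e k * y ^ (-m)` if `-N < m < 0`; `opE`, `opX`, `opY` are left multiplication by `e i`, `x`, `y`
written on coefficient functions, the sign in `opY` coming from `y ^ N = -x ^ N`. -/

variable (R : Type*) [CommRing R] (N : ℕ)

def opE (i : Fin 4) : Module.End R (Fin 4 × ℤ → R) where
  toFun f p := if p.1 = i then f p else 0
  map_add' f g := by ext p; simp only [Pi.add_apply]; split_ifs <;> ring
  map_smul' c f := by
    ext p; simp only [Pi.smul_apply, smul_eq_mul, RingHom.id_apply]; split_ifs <;> ring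

def opX : Module.End R (Fin 4 × ℤ → R) where
  toFun f p := if 1 ≤ p.2 ∧ p.2 ≤ N then f (p.1 + 1, p.2 - 1) else 0
  map_add' f g := by ext p; simp only [Pi.add_apply]; split_ifs <;> ring
  map_smul' c f := by
    ext p; simp only [Pi.smul_apply, smul_eq_mul, RingHom.id_apply]; split_ifs <;> ring

def opY : Module.End R (Fin 4 × ℤ → R) where
  toFun f p :=
    if -N < p.2 ∧ p.2 ≤ -1 then f (p.1 + 1, p.2 + 1)
    else if p.2 = N then -f (p.1 + 1, 1 - N) else 0
  map_add' f g := by ext p; simp only [Pi.add_apply]; split_ifs <;> ring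
  map_smul' c f := by
    ext p; simp only [Pi.smul_apply, smul_eq_mul, RingHom.id_apply]; split_ifs <;> ring

def oneVec : Fin 4 × ℤ → R := fun p => if p.2 = 0 then 1 else 0

variable {R N}

theorem opE_apply (i : Fin 4) (f : Fin 4 × ℤ → R) (k : Fin 4) (m : ℤ) :
    opE R i f (k, m) = if k = i then f (k, m) else 0 := rfl

theorem opX_apply (f : Fin 4 × ℤ → R) (k : Fin 4) (m : ℤ) :
    opX R N f (k, m) = if 1 ≤ m ∧ m ≤ N then f (k + 1, m - 1) else 0 := rfl

theorem opY_apply (f : Fin 4 × ℤ → R) (k : Fin 4) (m : ℤ) :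
    opY R N f (k, m) =
      if -N < m ∧ m ≤ -1 then f (k + 1, m + 1) else if m = N then -f (k + 1, 1 - N) else 0 :=
  rfl

theorem opX_pow_succ_apply (n : ℕ) (f : Fin 4 × ℤ → R) (k : Fin 4) (m : ℤ) :
    (opX R N ^ (n + 1)) f (k, m) =
      if n + 1 ≤ m ∧ m ≤ N then f (k + (n + 1 : ℕ), m - (n + 1 : ℕ)) else 0 := by
  induction n generalizing k m with
  | zero => simp [opX_apply]
  | succ n ih =>
    rw [pow_succ', Module.End.mul_apply, opX_apply, ih]
    split_ifs <;> first | rfl | omega | (congr 2 <;> push_cast <;> ring)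

theorem opY_pow_succ_apply {n : ℕ} (hn : n < N) (f : Fin 4 × ℤ → R) (k : Fin 4) (m : ℤ) :
    (opY R N ^ (n + 1)) f (k, m) =
      if -N < m ∧ m ≤ -(n + 1 : ℕ) then f (k + (n + 1 : ℕ), m + (n + 1 : ℕ))
      else if m = N then -f (k + (n + 1 : ℕ), (n + 1 : ℕ) - N) else 0 := by
  induction n generalizing k m with
  | zero => simp [opY_apply]
  | succ n ih =>
    rw [pow_succ', Module.End.mul_apply, opY_apply, ih (by omega), ih (by omega)]
    split_ifs <;> first | rfl | omega | ((try rw [neg_inj]); congr 2 <;> push_cast <;> ring)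

theorem relations_op (hN : 1 ≤ N) : Relations N (opE R) (opX R N) (opY R N) where
  e_mul_e i j := by
    ext f ⟨k, m⟩
    split_ifs <;>
      simp only [Module.End.mul_apply, opE_apply, LinearMap.zero_apply, Pi.zero_apply] <;>
      split_ifs <;> simp_all
  sum_e := by
    ext f ⟨k, m⟩
    simp [LinearMap.sum_apply, Finset.sum_apply, opE_apply]
  x_mul_e i := by
    ext f ⟨k, m⟩
    simp only [Module.End.mul_apply, opE_apply, opX_apply, add_left_inj]
    split_ifs <;> simp_all
  y_mul_e i := by
    ext f ⟨k, m⟩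
    simp only [Module.End.mul_apply, opE_apply, opY_apply, add_left_inj]
    split_ifs <;> simp_all
  x_mul_y := by
    ext f ⟨k, m⟩
    simp only [Module.End.mul_apply, opX_apply, opY_apply, LinearMap.zero_apply, Pi.zero_apply]
    split_ifs <;> first | rfl | omega
  y_mul_x := by
    ext f ⟨k, m⟩
    simp only [Module.End.mul_apply, opX_apply, opY_apply, LinearMap.zero_apply, Pi.zero_apply]
    split_ifs <;> first | rfl | omega | simp
  pow_add_pow := by
    obtain ⟨n, rfl⟩ := Nat.exists_eq_add_of_le' hN
    ext f ⟨k, m⟩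
    simp only [LinearMap.add_apply, Pi.add_apply, opX_pow_succ_apply,
      opY_pow_succ_apply n.lt_succ_self, LinearMap.zero_apply, Pi.zero_apply]
    split_ifs <;> first | omega | (subst_vars; simp)

def pathIndex : Fin 4 × (Fin (N + 1) ⊕ Fin (N - 1)) → Fin 4 × ℤ
  | (i, .inl j) => (i, j)
  | (i, .inr l) => (i, -(l + 1))

theorem pathIndex_injective : Function.Injective (pathIndex (N := N)) := by
  rintro ⟨i, j | l⟩ ⟨i', j' | l'⟩ h <;> simp [pathIndex, Fin.ext_iff] at h ⊢ <;> omega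

theorem pathFamily_op_apply_oneVec (s : Fin 4 × (Fin (N + 1) ⊕ Fin (N - 1))) :
    pathFamily N (opE R) (opX R N) (opY R N) s (oneVec R) = Pi.single (pathIndex s) 1 := by
  ext ⟨k, m⟩
  rcases s with ⟨i, ⟨_ | j, hj⟩ | ⟨l, hl⟩⟩ <;>
    simp only [pathFamily, Module.End.mul_apply, pow_zero, Module.End.one_apply, opE_apply,
      opX_pow_succ_apply]
  rotate_right
  rw [opY_pow_succ_apply (by omega)]
  all_goals
    simp only [pathIndex, oneVec, Pi.single_apply, Prod.mk.injEq]
    split_ifs <;> first | rfl | omega | simp_all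

theorem linearIndependent_pathFamily [Nontrivial R] {A : Type*} [Ring A] [Algebra R A]
    {e : Fin 4 → A} {x y : A} (φ : A →ₐ[R] Module.End R (Fin 4 × ℤ → R))
    (he : ∀ i, φ (e i) = opE R i) (hx : φ x = opX R N) (hy : φ y = opY R N) :
    LinearIndependent R (pathFamily N e x y) := by
  refine LinearIndependent.of_comp (LinearMap.applyₗ (oneVec R) ∘ₗ φ.toLinearMap) ?_
  convert (Pi.linearIndependent_single_one (Fin 4 × ℤ) R).comp _ pathIndex_injective
  ext s : 1
  simp [map_pathFamily, Function.comp_def, he, hx, hy, pathFamily_op_apply_oneVec]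

end RegularRepresentation

noncomputable def mk : FreeAlgebra K Gen →ₐ[K] AT K T := RingQuot.mkAlgHom K (ATRel K T)

noncomputable def aA (i : Fin 4) : AT K T := mk K T (FreeAlgebra.ι K (Gen.a i))

noncomputable def bA (i : Fin 4) : AT K T := mk K T (FreeAlgebra.ι K (Gen.b i))

@[simp] theorem mk_ι_e (i : Fin 4) : mk K T (FreeAlgebra.ι K (Gen.e i)) = eA K T i := rfl

@[simp] theorem mk_ι_a (i : Fin 4) : mk K T (FreeAlgebra.ι K (Gen.a i)) = aA K T i := rfl

@[simp] theorem mk_ι_b (i : Fin 4) : mk K T (FreeAlgebra.ι K (Gen.b i)) = bA K T i := rfl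

@[simp] theorem mk_gx : mk K T (gx K) = xA K T := rfl

@[simp] theorem mk_gy : mk K T (gy K) = yA K T := rfl

theorem mk_rel {r r' : FreeAlgebra K Gen} (h : ATRel K T r r') : mk K T r = mk K T r' :=
  RingQuot.mkAlgHom_rel K h

theorem eA_mul_eA (i j : Fin 4) : eA K T i * eA K T j = if i = j then eA K T i else 0 := by
  simpa [apply_ite (mk K T)] using mk_rel K T (.ee i j)

theorem xA_eq_sum : xA K T = ∑ i, aA K T i := by simp [← mk_gx, gx]

theorem yA_eq_sum : yA K T = ∑ i, bA K T i := by simp [← mk_gy, gy]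

theorem eA_mul_xA (i : Fin 4) : eA K T i * xA K T = aA K T i := by
  rw [xA_eq_sum]
  exact e_mul_sum (eA_mul_eA K T) (fun i => by simpa using mk_rel K T (.ea i)) i

theorem eA_mul_yA (i : Fin 4) : eA K T i * yA K T = bA K T i := by
  rw [yA_eq_sum]
  exact e_mul_sum (eA_mul_eA K T) (fun i => by simpa using mk_rel K T (.eb i)) i

theorem relations : Relations (4 * T + 2) (eA K T) (xA K T) (yA K T) where
  e_mul_e := eA_mul_eA K T
  sum_e := by simpa using mk_rel K T .sum
  x_mul_e i := by
    rw [eA_mul_xA, xA_eq_sum]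
    exact sum_mul_e_succ (eA_mul_eA K T) (fun i => by simpa using mk_rel K T (.ae i)) i
  y_mul_e i := by
    rw [eA_mul_yA, yA_eq_sum]
    exact sum_mul_e_succ (eA_mul_eA K T) (fun i => by simpa using mk_rel K T (.be i)) i
  x_mul_y := by simpa using mk_rel K T .xy
  y_mul_x := by simpa using mk_rel K T .yx
  pow_add_pow := by simpa using mk_rel K T .xy_pow
theorem adjoin_eq_top : Algebra.adjoin K (Set.range (eA K T) ∪ {xA K T, yA K T}) = ⊤ := by
  set s := Set.range (eA K T) ∪ {xA K T, yA K T}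
  have he (i : Fin 4) : eA K T i ∈ Algebra.adjoin K s := Algebra.subset_adjoin (.inl ⟨i, rfl⟩)
  have hx : xA K T ∈ Algebra.adjoin K s := Algebra.subset_adjoin (.inr (.inl rfl))
  have hy : yA K T ∈ Algebra.adjoin K s := Algebra.subset_adjoin (.inr (.inr rfl))
  have hmk : (mk K T).range = ⊤ :=
    (AlgHom.range_eq_top _).2 (RingQuot.mkAlgHom_surjective K (ATRel K T))
  rw [eq_top_iff, ← hmk, ← Algebra.map_top, ← FreeAlgebra.adjoin_range_ι, AlgHom.map_adjoin,
    Algebra.adjoin_le_iff]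
  rintro _ ⟨_, ⟨g, rfl⟩, rfl⟩
  cases g with
  | e i => exact he i
  | a i => simpa [← eA_mul_xA] using mul_mem (he i) hx
  | b i => simpa [← eA_mul_yA] using mul_mem (he i) hy

section Lift

variable {A : Type*} [Ring A] [Algebra K A] {e : Fin 4 → A} {x y : A}

def liftGen (e : Fin 4 → A) (x y : A) : Gen → A
  | .e i => e i
  | .a i => e i * x
  | .b i => e i * y

theorem freeLift_liftGen_gx (h : ∑ i, e i = 1) :
    FreeAlgebra.lift K (liftGen e x y) (gx K) = x := by
  simp [gx, liftGen, ← Finset.sum_mul, h]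

theorem freeLift_liftGen_gy (h : ∑ i, e i = 1) :
    FreeAlgebra.lift K (liftGen e x y) (gy K) = y := by
  simp [gy, liftGen, ← Finset.sum_mul, h]

variable {K T}

noncomputable def lift (h : Relations (4 * T + 2) e x y) : AT K T →ₐ[K] A :=
  RingQuot.liftAlgHom K ⟨FreeAlgebra.lift K (liftGen e x y), fun r r' hr => by
    induction hr with
    | ee i j => simp [liftGen, h.e_mul_e, apply_ite (FreeAlgebra.lift K (liftGen e x y))]
    | sum => simp [liftGen, h.sum_e]
    | ea i | eb i => simp [liftGen, ← mul_assoc, h.e_mul_self]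
    | ae i =>
      simp only [map_mul, FreeAlgebra.lift_ι_apply, liftGen]
      rw [mul_assoc, h.x_mul_e, ← mul_assoc, h.e_mul_self]
    | be i =>
      simp only [map_mul, FreeAlgebra.lift_ι_apply, liftGen]
      rw [mul_assoc, h.y_mul_e, ← mul_assoc, h.e_mul_self]
    | xy =>
      simpa [freeLift_liftGen_gx K h.sum_e, freeLift_liftGen_gy K h.sum_e] using h.x_mul_y
    | yx =>
      simpa [freeLift_liftGen_gx K h.sum_e, freeLift_liftGen_gy K h.sum_e] using h.y_mul_x
    | xy_pow =>
      simpa [freeLift_liftGen_gx K h.sum_e, freeLift_liftGen_gy K h.sum_e] using h.pow_add_pow⟩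

theorem lift_mk (h : Relations (4 * T + 2) e x y) (r : FreeAlgebra K Gen) :
    lift h (mk K T r) = FreeAlgebra.lift K (liftGen e x y) r :=
  RingQuot.liftAlgHom_mkAlgHom_apply K _ _ r

@[simp] theorem lift_eA (h : Relations (4 * T + 2) e x y) (i : Fin 4) :
    lift h (eA K T i) = e i := by
  rw [← mk_ι_e, lift_mk, FreeAlgebra.lift_ι_apply, liftGen]

@[simp] theorem lift_xA (h : Relations (4 * T + 2) e x y) : lift h (xA K T) = x := by
  rw [← mk_gx, lift_mk, freeLift_liftGen_gx K h.sum_e]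

@[simp] theorem lift_yA (h : Relations (4 * T + 2) e x y) : lift h (yA K T) = y := by
  rw [← mk_gy, lift_mk, freeLift_liftGen_gy K h.sum_e]

end Lift

end AT

theorem basis_and_dim_AT_general (K : Type) [Field K] (T : ℕ) :
    (∃ B : Module.Basis (Fin 4 × (Fin (4 * T + 3) ⊕ Fin (4 * T + 1))) K (AT K T),
      (∀ (i : Fin 4) (j : Fin (4 * T + 3)), B (i, Sum.inl j) = eA K T i * xA K T ^ (j : ℕ)) ∧
      (∀ (i : Fin 4) (l : Fin (4 * T + 1)), B (i, Sum.inr l) = eA K T i * yA K T ^ ((l : ℕ) + 1))) ∧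
    Module.finrank K (AT K T) = 16 * (2 * T + 1) := by
  have hN : 1 ≤ 4 * T + 2 := by omega
  have hli := AT.linearIndependent_pathFamily (AT.lift (AT.relations_op (R := K) hN))
    (AT.lift_eA _) (AT.lift_xA _) (AT.lift_yA _)
  have hspan := (AT.relations K T).span_pathFamily hN (AT.adjoin_eq_top K T)
  let B : Module.Basis (Fin 4 × (Fin (4 * T + 3) ⊕ Fin (4 * T + 1))) K (AT K T) :=
    (Module.Basis.mk hli hspan.ge).reindex
      ((Equiv.refl _).prodCongr ((finCongr (by omega)).sumCongr (finCongr (by omega))))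
  refine ⟨⟨B, fun i j => ?_, fun i l => ?_⟩, ?_⟩
  · simp [B, AT.pathFamily]
  · simp [B, AT.pathFamily]
  · rw [Module.finrank_eq_card_basis B]
    simp only [Fintype.card_prod, Fintype.card_sum, Fintype.card_fin]
    ring

theorem basis_and_dim_AT (K : Type) [Field K] [IsAlgClosed K] (T : ℕ) :
    (∃ B : Module.Basis (Fin 4 × (Fin (4 * T + 3) ⊕ Fin (4 * T + 1))) K (AT K T),
      (∀ (i : Fin 4) (j : Fin (4 * T + 3)), B (i, Sum.inl j) = eA K T i * xA K T ^ (j : ℕ)) ∧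
      (∀ (i : Fin 4) (l : Fin (4 * T + 1)), B (i, Sum.inr l) = eA K T i * yA K T ^ ((l : ℕ) + 1))) ∧
    Module.finrank K (AT K T) = 16 * (2 * T + 1) :=
  basis_and_dim_AT_general K T
end

section
/- For all 0 ≤ i, j ≤ 3, the dimension of the Peirce subspace e_i A_T e_j over K equals 2T+1 if j − i ≡ 0 (mod 4), 2T+2 if j − i ≡ 1 (mod 4), 2T+1 if j − i ≡ 2 (mod 4), and 2T if j − i ≡ 3 (mod 4). -/
/-!
Write `N = 4T + 2`. Since `xy = yx = 0` and `y ^ N = -x ^ N`, right multiplication by `x` and `y`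
preserves the span of the monomials `x ^ k` (`k ≤ N`) and `y ^ k` (`1 ≤ k < N`), and
`e_i x = x e_{i+1}`, `e_i y = y e_{i+1}`; hence `e_i A_T e_j` is spanned by the `e_i x ^ k`,
`e_i y ^ k` with `k ≡ j - i (mod 4)`. These are linearly independent: `e_i ↦ E_ii`,
`a_i ↦ x E_{i,i+1}`, `b_i ↦ y E_{i,i+1}` is a representation of `A_T` in `4 × 4` matrices over any
algebra containing `x, y` subject to the relations of `K[x, y] / (xy, x ^ N + y ^ N)`, and for the
regular representation of that local algebra the `(i, j)` entry of such an element is the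
monomial itself. Counting exponents modulo `4` gives the dimensions.
-/

open scoped TensorProduct

variable (K : Type) [Field K]

variable (T : ℕ)

/-- The Peirce subspace `e_i A_T e_j`, realized as the range of the `K`-linear map
`a ↦ e_i * a * e_j`. -/
noncomputable def peirceSubspace (K : Type) [Field K] (T : ℕ) (i j : Fin 4) : Submodule K (AT K T) :=
  LinearMap.range ((LinearMap.mulLeft K (eA K T i)).comp (LinearMap.mulRight K (eA K T j)))

open scoped Fin.NatCast

theorem mul_pow_eq_pow_mul_of_forall {R G : Type*} [Monoid R] [AddMonoidWithOne G]
    {e : G → R} {z : R} (h : ∀ i, e i * z = z * e (i + 1)) (i : G) (n : ℕ) :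
    e i * z ^ n = z ^ n * e (i + n) := by
  induction n with
  | zero => simp
  | succ n ih =>
    rw [pow_succ, ← mul_assoc, ih, mul_assoc, h, ← mul_assoc, Nat.cast_succ, add_assoc]

theorem mul_sum_eq_and_sum_mul_eq {ι S : Type*} [Fintype ι] [DecidableEq ι] [Semiring S]
    {e α : ι → S} {σ : ι → ι} (hσ : σ.Injective)
    (he : ∀ i j, e i * e j = if i = j then e i else 0)
    (hl : ∀ i, e i * α i = α i) (hr : ∀ i, α i * e (σ i) = α i) (i : ι) :
    e i * ∑ k, α k = α i ∧ (∑ k, α k) * e (σ i) = α i := by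
  constructor
  · rw [Finset.mul_sum, Finset.sum_eq_single i (fun k _ hk => ?_) (by simp), hl]
    rw [← hl k, ← mul_assoc, he, if_neg hk.symm, zero_mul]
  · rw [Finset.sum_mul, Finset.sum_eq_single i (fun k _ hk => ?_) (by simp), hr]
    rw [← hr k, mul_assoc, he, if_neg (hσ.ne hk), mul_zero]

abbrev XYMonomial (m : ℕ) : Type := Fin (m + 3) ⊕ Fin (m + 1)

namespace XYMonomial

variable {m : ℕ}

def deg : XYMonomial m → ℕ
  | .inl k => k
  | .inr k => k + 1

def eval {R : Type*} [Monoid R] (x y : R) : XYMonomial m → R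
  | .inl k => x ^ (k : ℕ)
  | .inr k => y ^ ((k : ℕ) + 1)

section Relations

variable {R : Type*} [Ring R] [Algebra K R] {x y : R}
  (hxy : x * y = 0) (hyx : y * x = 0) (hpow : x ^ (m + 2) + y ^ (m + 2) = 0)
include hyx hpow

theorem pow_eq_zero_of_rel : x ^ (m + 3) = 0 := by
  rw [pow_succ, eq_neg_of_add_eq_zero_left hpow, neg_mul, pow_succ, mul_assoc, hyx, mul_zero,
    neg_zero]

include hxy

theorem eval_mul_mem_span (u : XYMonomial m) :
    eval x y u * x ∈ Submodule.span K (Set.range (eval (m := m) x y)) ∧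
      eval x y u * y ∈ Submodule.span K (Set.range (eval (m := m) x y)) := by
  have mem (v : XYMonomial m) :=
    Submodule.subset_span (R := K) (Set.mem_range_self (f := eval x y) v)
  rcases u with ⟨k, hk⟩ | ⟨k, hk⟩
  · constructor
    · show x ^ k * x ∈ _
      rw [← pow_succ]
      rcases Nat.lt_or_ge (k + 1) (m + 3) with h | h
      · exact mem (.inl ⟨k + 1, h⟩)
      · rw [show k + 1 = m + 3 by omega, pow_eq_zero_of_rel hyx hpow]
        exact zero_mem _
    · show x ^ k * y ∈ _
      rcases k with _ | k
      · simpa [eval] using mem (.inr 0)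
      · rw [pow_succ, mul_assoc, hxy, mul_zero]
        exact zero_mem _
  · constructor
    · show y ^ (k + 1) * x ∈ _
      rw [pow_succ, mul_assoc, hyx, mul_zero]
      exact zero_mem _
    · show y ^ (k + 1) * y ∈ _
      rw [← pow_succ]
      rcases Nat.lt_or_ge (k + 1) (m + 1) with h | h
      · exact mem (.inr ⟨k + 1, h⟩)
      · rw [show k + 1 + 1 = m + 2 by omega, eq_neg_of_add_eq_zero_right hpow]
        exact neg_mem (mem (.inl (Fin.last _)))

end Relations

open Finsupp

noncomputable def xStep : XYMonomial m → (XYMonomial m →₀ K)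
  | .inl k => if h : k.1 + 1 < m + 3 then single (.inl ⟨k + 1, h⟩) 1 else 0
  | .inr _ => 0

noncomputable def yStep : XYMonomial m → (XYMonomial m →₀ K)
  | .inl k => if k.1 = 0 then single (.inr 0) 1 else 0
  | .inr k => if h : k.1 + 1 < m + 1 then single (.inr ⟨k + 1, h⟩) 1
      else -single (.inl (Fin.last _)) 1 -- `y ^ (m + 2) = -x ^ (m + 2)`

noncomputable def xOp : Module.End K (XYMonomial m →₀ K) := linearCombination K (xStep K)

noncomputable def yOp : Module.End K (XYMonomial m →₀ K) := linearCombination K (yStep K)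

theorem xOp_mul_yOp : xOp K * yOp K = (0 : Module.End K (XYMonomial m →₀ K)) := by
  refine lhom_ext fun u c => ?_
  rcases u with ⟨k, hk⟩ | ⟨k, hk⟩ <;>
    simp [xOp, yOp, yStep, linearCombination_single] <;> split_ifs <;> simp [xStep]

theorem yOp_mul_xOp : yOp K * xOp K = (0 : Module.End K (XYMonomial m →₀ K)) := by
  refine lhom_ext fun u c => ?_
  rcases u with ⟨k, hk⟩ | ⟨k, hk⟩ <;>
    simp [xOp, yOp, xStep, linearCombination_single]; split_ifs <;> simp [yStep]

theorem eval_apply_single (u : XYMonomial m) :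
    eval (xOp K) (yOp K) u (single (.inl 0) 1) = single u 1 := by
  rcases u with ⟨k, hk⟩ | ⟨k, hk⟩
  · induction k with
    | zero => rfl
    | succ k ih =>
      simp only [eval] at ih ⊢
      rw [pow_succ', Module.End.mul_apply, ih (by omega), xOp, linearCombination_single, one_smul,
        xStep, dif_pos hk]
  · induction k with
    | zero => simp [eval, yOp, yStep]
    | succ k ih =>
      simp only [eval] at ih ⊢
      rw [pow_succ', Module.End.mul_apply, ih (by omega), yOp, linearCombination_single, one_smul,
        yStep, dif_pos hk]

theorem xOp_pow_add_yOp_pow :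
    xOp K ^ (m + 2) + yOp K ^ (m + 2) = (0 : Module.End K (XYMonomial m →₀ K)) := by
  set z : Module.End K (XYMonomial m →₀ K) := xOp K ^ (m + 2) + yOp K ^ (m + 2)
  have hcomm : Commute (xOp K) (yOp (m := m) K) := by
    rw [Commute, SemiconjBy, xOp_mul_yOp, yOp_mul_xOp]
  have hzx : Commute z (xOp K) := ((Commute.refl _).pow_left _).add_left (hcomm.symm.pow_left _)
  have hzy : Commute z (yOp K) := (hcomm.pow_left _).add_left ((Commute.refl _).pow_left _)
  have hbase : z (single (.inl 0) 1) = 0 := by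
    have hx := eval_apply_single K (.inl (Fin.last (m + 2)))
    have hy := eval_apply_single K (m := m) (.inr (Fin.last m))
    simp only [eval, Fin.val_last] at hx hy
    rw [LinearMap.add_apply, hx, pow_succ', Module.End.mul_apply, hy, yOp,
      linearCombination_single, one_smul, yStep, dif_neg (by simp), Fin.last, add_neg_cancel]
  refine lhom_ext fun u c => ?_
  have hzu : Commute z (eval (xOp K) (yOp K) u) := by
    rcases u with k | k
    exacts [hzx.pow_right _, hzy.pow_right _]
  rw [← mul_one c, ← smul_eq_mul, ← smul_single, map_smul, map_smul,
    ← eval_apply_single K u, ← Module.End.mul_apply, hzu.eq, Module.End.mul_apply, hbase, map_zero, smul_zero,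
    LinearMap.zero_apply, smul_zero]

end XYMonomial

namespace Matrix

variable {ι R : Type*} [Fintype ι] [DecidableEq ι] [Semiring R]

def shift [Add ι] (n : ι) (r : R) : Matrix ι ι R := ∑ i, single i (i + n) r

theorem single_mul_shift [Add ι] (i : ι) (n : ι) (r s : R) :
    single i i r * shift n s = single i (i + n) (r * s) := by
  rw [shift, Finset.mul_sum, Finset.sum_eq_single i
    (fun j _ hj => single_mul_single_of_ne _ _ _ _ (Ne.symm hj) _) (by simp),
    single_mul_single_same]

theorem shift_mul_shift [AddSemigroup ι] (a b : ι) (r s : R) :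
    shift a r * shift b s = shift (a + b) (r * s) := by
  rw [shift, shift, shift, Finset.sum_mul_sum]
  refine Finset.sum_congr rfl fun i _ => ?_
  rw [Finset.sum_eq_single (i + a) (fun j _ hj => single_mul_single_of_ne _ _ _ _ (Ne.symm hj) _)
    (by simp), single_mul_single_same, add_assoc]

theorem shift_add [Add ι] (n : ι) (r s : R) : shift n (r + s) = shift n r + shift n s := by
  simp [shift, single_add, Finset.sum_add_distrib]

@[simp]
theorem shift_zero [Add ι] (n : ι) : shift n (0 : R) = 0 := by
  simp [shift]

theorem shift_one_pow [AddMonoidWithOne ι] (r : R) (n : ℕ) :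
    shift 1 r ^ n = shift (n : ι) (r ^ n) := by
  induction n with
  | zero => simp [shift, sum_single_eq_diagonal, diagonal_one]
  | succ n ih => rw [pow_succ, ih, shift_mul_shift, Nat.cast_succ, pow_succ]

end Matrix

section Presentation

noncomputable def toAT : FreeAlgebra K Gen →ₐ[K] AT K T :=
  show FreeAlgebra K Gen →ₐ[K] RingQuot (ATRel K T) from RingQuot.mkAlgHom K (ATRel K T)

variable {K T}

theorem toAT_surjective : Function.Surjective (toAT K T) :=
  RingQuot.mkAlgHom_surjective K (ATRel K T)

theorem toAT_eq_of_rel {a b : FreeAlgebra K Gen} (h : ATRel K T a b) : toAT K T a = toAT K T b :=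
  RingQuot.mkAlgHom_rel K h

theorem eA_mul_eA (i j : Fin 4) : eA K T i * eA K T j = if i = j then eA K T i else 0 := by
  have h := toAT_eq_of_rel (ATRel.ee (K := K) (T := T) i j)
  rwa [map_mul, apply_ite (toAT K T), map_zero] at h

theorem sum_eA : ∑ i, eA K T i = 1 := by
  have h := toAT_eq_of_rel (ATRel.sum (K := K) (T := T))
  rwa [map_sum, map_one] at h

theorem xA_mul_yA : xA K T * yA K T = 0 := by
  have h := toAT_eq_of_rel (ATRel.xy (K := K) (T := T))
  rwa [map_mul, map_zero] at h

theorem yA_mul_xA : yA K T * xA K T = 0 := by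
  have h := toAT_eq_of_rel (ATRel.yx (K := K) (T := T))
  rwa [map_mul, map_zero] at h

theorem xA_pow_add_yA_pow : xA K T ^ (4 * T + 2) + yA K T ^ (4 * T + 2) = 0 := by
  have h := toAT_eq_of_rel (ATRel.xy_pow (K := K) (T := T))
  rwa [map_add, map_pow, map_pow, map_zero] at h

end Presentation

section Cover

open Matrix

variable {T} {R : Type*} [Ring R] [Algebra K R]

noncomputable def coverGen (x y : R) : Gen → Matrix (Fin 4) (Fin 4) R
  | .e i => single i i 1
  | .a i => single i (i + 1) x
  | .b i => single i (i + 1) y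

theorem lift_coverGen_gx (x y : R) :
    FreeAlgebra.lift K (coverGen x y) (gx K) = shift 1 x := by
  simp [gx, shift, coverGen]

theorem lift_coverGen_gy (x y : R) :
    FreeAlgebra.lift K (coverGen x y) (gy K) = shift 1 y := by
  simp [gy, shift, coverGen]

variable {x y : R} (hxy : x * y = 0) (hyx : y * x = 0)
  (hpow : x ^ (4 * T + 2) + y ^ (4 * T + 2) = 0)
include hxy hyx hpow

theorem coverGen_rel ⦃a b : FreeAlgebra K Gen⦄ (h : ATRel K T a b) :
    FreeAlgebra.lift K (coverGen x y) a = FreeAlgebra.lift K (coverGen x y) b := by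
  induction h with
  | ee i j =>
    rcases eq_or_ne i j with rfl | hij
    · simp [coverGen]
    · simp [coverGen, hij]
  | sum => simp [coverGen, sum_single_eq_diagonal, diagonal_one]
  | ea i => simp [coverGen]
  | ae i => simp [coverGen]
  | eb i => simp [coverGen]
  | be i => simp [coverGen]
  | xy => simp [lift_coverGen_gx, lift_coverGen_gy, shift_mul_shift, hxy]
  | yx => simp [lift_coverGen_gx, lift_coverGen_gy, shift_mul_shift, hyx]
  | xy_pow => simp [lift_coverGen_gx, lift_coverGen_gy, shift_one_pow, ← shift_add, hpow]

noncomputable def coverHom : AT K T →ₐ[K] Matrix (Fin 4) (Fin 4) R :=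
  show RingQuot (ATRel K T) →ₐ[K] _ from
    RingQuot.liftAlgHom K ⟨FreeAlgebra.lift K (coverGen x y), coverGen_rel K hxy hyx hpow⟩

theorem coverHom_toAT (a : FreeAlgebra K Gen) :
    coverHom K hxy hyx hpow (toAT K T a) =
      FreeAlgebra.lift K (coverGen x y) a :=
  RingQuot.liftAlgHom_mkAlgHom_apply _ _ _ _

theorem coverHom_eA (i : Fin 4) : coverHom K hxy hyx hpow (eA K T i) = single i i 1 :=
  (coverHom_toAT K hxy hyx hpow _).trans (by simp [coverGen])

theorem coverHom_xA : coverHom K hxy hyx hpow (xA K T) = shift 1 x :=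
  (coverHom_toAT K hxy hyx hpow _).trans (lift_coverGen_gx K x y)

theorem coverHom_yA : coverHom K hxy hyx hpow (yA K T) = shift 1 y :=
  (coverHom_toAT K hxy hyx hpow _).trans (lift_coverGen_gy K x y)

theorem coverHom_eA_mul_eval (i : Fin 4) (u : XYMonomial (4 * T)) :
    coverHom K hxy hyx hpow (eA K T i * u.eval (xA K T) (yA K T)) =
      single i (i + (u.deg : Fin 4)) (u.eval x y) := by
  rcases u with k | k <;>
    simp [XYMonomial.eval, XYMonomial.deg, coverHom_eA, coverHom_xA, coverHom_yA, shift_one_pow,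
      single_mul_shift]

end Cover


section Arrows

variable {K T}

theorem eA_mul_toAT_sum_and_toAT_sum_mul_eA (g : Fin 4 → Gen)
    (hl : ∀ i, ATRel K T (FreeAlgebra.ι K (Gen.e i) * FreeAlgebra.ι K (g i))
      (FreeAlgebra.ι K (g i)))
    (hr : ∀ i, ATRel K T (FreeAlgebra.ι K (g i) * FreeAlgebra.ι K (Gen.e (i + 1)))
      (FreeAlgebra.ι K (g i)))
    (i : Fin 4) :
    eA K T i * toAT K T (∑ k, FreeAlgebra.ι K (g k)) =
        toAT K T (FreeAlgebra.ι K (g i)) ∧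
      toAT K T (∑ k, FreeAlgebra.ι K (g k)) * eA K T (i + 1) =
        toAT K T (FreeAlgebra.ι K (g i)) := by
  rw [map_sum]
  refine mul_sum_eq_and_sum_mul_eq (add_left_injective 1) eA_mul_eA (fun k => ?_) (fun k => ?_) i
  · have h := toAT_eq_of_rel (hl k)
    rwa [map_mul] at h
  · have h := toAT_eq_of_rel (hr k)
    rwa [map_mul] at h

theorem toAT_ι_a (i : Fin 4) :
    toAT K T (FreeAlgebra.ι K (Gen.a i)) = eA K T i * xA K T :=
  (eA_mul_toAT_sum_and_toAT_sum_mul_eA Gen.a ATRel.ea ATRel.ae i).1.symm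

theorem toAT_ι_b (i : Fin 4) :
    toAT K T (FreeAlgebra.ι K (Gen.b i)) = eA K T i * yA K T :=
  (eA_mul_toAT_sum_and_toAT_sum_mul_eA Gen.b ATRel.eb ATRel.be i).1.symm

theorem eA_mul_xA (i : Fin 4) : eA K T i * xA K T = xA K T * eA K T (i + 1) := by
  obtain ⟨h₁, h₂⟩ :=
    eA_mul_toAT_sum_and_toAT_sum_mul_eA (K := K) (T := T) Gen.a ATRel.ea ATRel.ae i
  exact h₁.trans h₂.symm

theorem eA_mul_yA (i : Fin 4) : eA K T i * yA K T = yA K T * eA K T (i + 1) := by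
  obtain ⟨h₁, h₂⟩ :=
    eA_mul_toAT_sum_and_toAT_sum_mul_eA (K := K) (T := T) Gen.b ATRel.eb ATRel.be i
  exact h₁.trans h₂.symm

theorem eA_mul_eval (i : Fin 4) (u : XYMonomial (4 * T)) :
    eA K T i * u.eval (xA K T) (yA K T) =
      u.eval (xA K T) (yA K T) * eA K T (i + (u.deg : Fin 4)) := by
  rcases u with k | k
  · exact mul_pow_eq_pow_mul_of_forall eA_mul_xA i _
  · exact mul_pow_eq_pow_mul_of_forall eA_mul_yA i _

theorem eA_mul_eval_mul_eA (s t : Fin 4) (u : XYMonomial (4 * T)) :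
    eA K T s * u.eval (xA K T) (yA K T) * eA K T t =
      if s + (u.deg : Fin 4) = t then eA K T s * u.eval (xA K T) (yA K T) else 0 := by
  rw [eA_mul_eval, mul_assoc, eA_mul_eA]
  split_ifs <;> simp

end Arrows

section Spanning

noncomputable def pathSpan : Submodule K (AT K T) :=
  Submodule.span K
    (Set.range fun p : Fin 4 × XYMonomial (4 * T) => eA K T p.1 * p.2.eval (xA K T) (yA K T))

variable {K T}

theorem eA_mul_eval_mem_pathSpan (s : Fin 4) (u : XYMonomial (4 * T)) :
    eA K T s * u.eval (xA K T) (yA K T) ∈ pathSpan K T :=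
  Submodule.subset_span ⟨(s, u), rfl⟩

theorem eA_mul_mem_pathSpan (s : Fin 4) {q : AT K T}
    (hq : q ∈ Submodule.span K (Set.range (XYMonomial.eval (m := 4 * T) (xA K T) (yA K T)))) :
    eA K T s * q ∈ pathSpan K T := by
  refine (Submodule.map_span_le (LinearMap.mulLeft K (eA K T s)) _ _).2 ?_ ⟨q, hq, rfl⟩
  rintro _ ⟨u, rfl⟩
  exact eA_mul_eval_mem_pathSpan s u

theorem mul_mem_pathSpan_of_forall {z : AT K T}
    (h : ∀ s u, eA K T s * XYMonomial.eval (m := 4 * T) (xA K T) (yA K T) u * z ∈ pathSpan K T)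
    {w : AT K T} (hw : w ∈ pathSpan K T) : w * z ∈ pathSpan K T := by
  refine (Submodule.map_span_le (LinearMap.mulRight K z) _ _).2 ?_ ⟨w, hw, rfl⟩
  rintro _ ⟨⟨s, u⟩, rfl⟩
  exact h s u

theorem mul_eA_mem_pathSpan {w : AT K T} (hw : w ∈ pathSpan K T) (t : Fin 4) :
    w * eA K T t ∈ pathSpan K T := by
  refine mul_mem_pathSpan_of_forall (fun s u => ?_) hw
  rw [eA_mul_eval_mul_eA]
  split_ifs
  exacts [eA_mul_eval_mem_pathSpan s u, zero_mem _]

theorem mul_xA_mem_pathSpan {w : AT K T} (hw : w ∈ pathSpan K T) :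
    w * xA K T ∈ pathSpan K T := by
  refine mul_mem_pathSpan_of_forall (fun s u => ?_) hw
  rw [mul_assoc]
  exact eA_mul_mem_pathSpan s
    (XYMonomial.eval_mul_mem_span K xA_mul_yA yA_mul_xA xA_pow_add_yA_pow u).1

theorem mul_yA_mem_pathSpan {w : AT K T} (hw : w ∈ pathSpan K T) :
    w * yA K T ∈ pathSpan K T := by
  refine mul_mem_pathSpan_of_forall (fun s u => ?_) hw
  rw [mul_assoc]
  exact eA_mul_mem_pathSpan s
    (XYMonomial.eval_mul_mem_span K xA_mul_yA yA_mul_xA xA_pow_add_yA_pow u).2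

theorem mul_mem_pathSpan {w : AT K T} (hw : w ∈ pathSpan K T) (z : AT K T) :
    w * z ∈ pathSpan K T := by
  obtain ⟨a, rfl⟩ := toAT_surjective z
  induction a using FreeAlgebra.induction generalizing w with
  | grade0 r =>
    rw [AlgHom.commutes, Algebra.algebraMap_eq_smul_one, mul_smul_one]
    exact Submodule.smul_mem _ r hw
  | grade1 g =>
    rcases g with i | i | i
    · exact mul_eA_mem_pathSpan hw i
    · rw [toAT_ι_a, ← mul_assoc]
      exact mul_xA_mem_pathSpan (mul_eA_mem_pathSpan hw i)
    · rw [toAT_ι_b, ← mul_assoc]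
      exact mul_yA_mem_pathSpan (mul_eA_mem_pathSpan hw i)
  | mul a b ha hb =>
    rw [map_mul, ← mul_assoc]
    exact hb (ha hw)
  | add a b ha hb =>
    rw [map_add, mul_add]
    exact add_mem (ha hw) (hb hw)

theorem mem_pathSpan (z : AT K T) : z ∈ pathSpan K T := by
  have hone : (1 : AT K T) ∈ pathSpan K T := by
    rw [← sum_eA]
    refine sum_mem fun s _ => ?_
    simpa [XYMonomial.eval] using eA_mul_eval_mem_pathSpan (K := K) (T := T) s (.inl 0)
  simpa using mul_mem_pathSpan hone z

end Spanning

section Peirce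

variable {K T}

noncomputable def peirceFamily (i j : Fin 4) :
    {u : XYMonomial (4 * T) // i + (u.deg : Fin 4) = j} → AT K T :=
  fun u => eA K T i * u.1.eval (xA K T) (yA K T)

theorem peirceSubspace_eq_span (i j : Fin 4) :
    peirceSubspace K T i j = Submodule.span K (Set.range (peirceFamily (K := K) i j)) := by
  apply le_antisymm
  · rintro _ ⟨z, rfl⟩
    refine (Submodule.map_span_le _ _ _).2 ?_ ⟨z, mem_pathSpan z, rfl⟩
    rintro _ ⟨⟨s, u⟩, rfl⟩
    simp only [LinearMap.comp_apply, LinearMap.mulRight_apply, LinearMap.mulLeft_apply,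
      ← mul_assoc, eA_mul_eA]
    split_ifs with hs
    · subst hs
      rw [eA_mul_eval_mul_eA]
      split_ifs with hu
      exacts [Submodule.subset_span ⟨⟨u, hu⟩, rfl⟩, zero_mem _]
    · simp
  · rw [Submodule.span_le]
    rintro _ ⟨⟨u, hu⟩, rfl⟩
    refine ⟨u.eval (xA K T) (yA K T), ?_⟩
    simp only [LinearMap.comp_apply, LinearMap.mulRight_apply, LinearMap.mulLeft_apply,
      ← mul_assoc, eA_mul_eval_mul_eA, if_pos hu]
    rfl

theorem linearIndependent_peirceFamily (i j : Fin 4) :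
    LinearIndependent K (peirceFamily (K := K) (T := T) i j) := by
  let ρ := coverHom K (T := T) (R := Module.End K (XYMonomial (4 * T) →₀ K))
    (XYMonomial.xOp_mul_yOp K) (XYMonomial.yOp_mul_xOp K)
    (XYMonomial.xOp_pow_add_yOp_pow K (m := 4 * T))
  let f : AT K T →ₗ[K] (XYMonomial (4 * T) →₀ K) :=
    LinearMap.applyₗ (Finsupp.single (.inl 0) 1) ∘ₗ Matrix.entryLinearMap K _ i j ∘ₗ
      ρ.toLinearMap
  refine LinearIndependent.of_comp f ?_
  have hf : f ∘ peirceFamily i j = fun u => Finsupp.single u.1 1 := by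
    funext ⟨u, hu⟩
    simp [f, ρ, peirceFamily, coverHom_eA_mul_eval, hu, XYMonomial.eval_apply_single]
  rw [hf]
  exact (Finsupp.linearIndependent_single_one K _).comp Subtype.val Subtype.val_injective

theorem finrank_peirceSubspace (i j : Fin 4) :
    Module.finrank K (peirceSubspace K T i j) =
      Fintype.card {u : XYMonomial (4 * T) // i + (u.deg : Fin 4) = j} := by
  rw [peirceSubspace_eq_span, finrank_span_eq_card (linearIndependent_peirceFamily i j)]

end Peirce

theorem card_fin_natCast_eq {q : ℕ} [NeZero q] (n : ℕ) (d : Fin q) :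
    Fintype.card {k : Fin n // ((k : ℕ) : Fin q) = d} =
      n / q + if (d : ℕ) < n % q then 1 else 0 := by
  have hd : ∀ k : ℕ, ((k : Fin q) = d ↔ k ≡ d [MOD q]) := fun k => by
    rw [Fin.ext_iff, Fin.val_natCast, Nat.ModEq, Nat.mod_eq_of_lt d.isLt]
  rw [← Nat.mod_eq_of_lt d.isLt, ← Nat.count_modEq_card _ (NeZero.pos q),
    Nat.count_eq_card_filter_range, Fintype.card_subtype, Finset.card_filter, Finset.card_filter,
    ← Fin.sum_univ_eq_sum_range (fun k => if k ≡ d [MOD q] then 1 else 0)]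
  simp only [hd]

theorem card_deg_eq_add (m : ℕ) (i j : Fin 4) :
    Fintype.card {u : XYMonomial m // i + (u.deg : Fin 4) = j} =
      Fintype.card {k : Fin (m + 3) // ((k : ℕ) : Fin 4) = j - i} +
        Fintype.card {k : Fin (m + 1) // ((k : ℕ) : Fin 4) = j - i - 1} := by
  rw [Fintype.card_congr Equiv.subtypeSum, Fintype.card_sum]
  congr 1
  all_goals refine Fintype.card_congr (Equiv.subtypeEquivRight fun k => ?_)
  · simp [XYMonomial.deg, eq_sub_iff_add_eq']
  · simp [XYMonomial.deg, eq_sub_iff_add_eq', add_comm (1 : Fin 4)]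

theorem dim_peirce_general (K : Type) [Field K] (T : ℕ) (i j : Fin 4) :
    Module.finrank K (peirceSubspace K T i j) =
      if j - i = (0 : Fin 4) then 2 * T + 1
      else if j - i = (1 : Fin 4) then 2 * T + 2
      else if j - i = (2 : Fin 4) then 2 * T + 1
      else 2 * T := by
  rw [finrank_peirceSubspace, card_deg_eq_add, card_fin_natCast_eq, card_fin_natCast_eq]
  generalize j - i = d
  fin_cases d <;> simp <;> omega

theorem dim_peirce (K : Type) [Field K] [IsAlgClosed K] (T : ℕ) (i j : Fin 4) :
    Module.finrank K (peirceSubspace K T i j) =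
      if j - i = (0 : Fin 4) then 2 * T + 1
      else if j - i = (1 : Fin 4) then 2 * T + 2
      else if j - i = (2 : Fin 4) then 2 * T + 1
      else 2 * T :=
  dim_peirce_general K T i j
end
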